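/- arXiv:1410.0483 — 2 statements merged into one kernel-verified Lean document; each statement's English description precedes it below -/
import Mathlib

section
/- Let M be a positively ordered monoid and let d ∈ ℕ with d ≥ 2. (1) If every element of M is divisible by d (for every a ∈ M there exists x ∈ M with a = d·x), then for every a ∈ M and every n ≥ 1 there exists x ∈ M with n·x ≤ a ≤ (n+1)·x. (2) If M is d-unperforated (d·a ≤ d·b implies a ≤ b for all a, b ∈ M), then M is nearly unperforated, and in particular almost unperforated. -/
/-- A positively ordered monoid is nearly unperforated if `a ≤ b` whenever
`k•a ≤ k•b` for all sufficiently large `k`. -/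
def NearlyUnperforated (M : Type*) [AddCommMonoid M] [PartialOrder M] [IsOrderedAddMonoid M] : Prop :=
  ∀ a b : M, (∃ k₀ : ℕ, ∀ k : ℕ, k₀ ≤ k → k • a ≤ k • b) → a ≤ b

/-- A positively ordered monoid is almost unperforated if `(k+1)•a ≤ k•b` for
some `k` implies `a ≤ b`. -/
def AlmostUnperforated (M : Type*) [AddCommMonoid M] [PartialOrder M] [IsOrderedAddMonoid M] : Prop :=
  ∀ a b : M, (∃ k : ℕ, (k + 1) • a ≤ k • b) → a ≤ b

/-!
Divisibility by `d` gives divisibility by every power `d ^ m`, and writing `a = N • y` with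
`n * n ≤ N`, the element `x = (N / n) • y` satisfies `n • x ≤ a ≤ (n + 1) • x` because the
remainder of `N` modulo `n` is below `n ≤ N / n`. Likewise `d`-unperforation cancels every
power `d ^ m`, and `d ^ m` eventually exceeds any `k₀`. Finally, `(k + 1) • a ≤ k • b` gives
`m • a ≤ (j + 1) • (k + 1) • a ≤ ((j + 1) * k) • b ≤ m • b` for `j = m / (k + 1)` as soon as
`j ≥ k`, so near unperforation implies almost unperforation.
-/

theorem Nat.le_succ_mul_div_of_mul_self_le {n N : ℕ} (hn : 0 < n) (h : n * n ≤ N) :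
    N ≤ (n + 1) * (N / n) := by
  have hq : n ≤ N / n := (Nat.le_div_iff_mul_le hn).2 h
  have hN : N < n * (N / n + 1) := Nat.lt_mul_div_succ N hn
  nlinarith

theorem exists_eq_pow_nsmul {M : Type*} [AddMonoid M] {d : ℕ} (hdiv : ∀ a : M, ∃ x, a = d • x)
    (m : ℕ) (a : M) : ∃ y, a = d ^ m • y := by
  induction m generalizing a with
  | zero => exact ⟨a, (one_nsmul a).symm⟩
  | succ m ih =>
    obtain ⟨x, rfl⟩ := hdiv a
    obtain ⟨y, rfl⟩ := ih x
    exact ⟨y, by rw [pow_succ, mul_nsmul]⟩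

theorem le_of_pow_nsmul_le_pow_nsmul {M : Type*} [AddMonoid M] [LE M] {d : ℕ}
    (hcancel : ∀ a b : M, d • a ≤ d • b → a ≤ b) {a b : M} (m : ℕ)
    (h : d ^ m • a ≤ d ^ m • b) : a ≤ b := by
  induction m with
  | zero => simpa using h
  | succ m ih => exact ih (hcancel _ _ (by rwa [← mul_nsmul, ← mul_nsmul, ← pow_succ]))

section PositivelyOrdered

variable {M : Type*} [AddCommMonoid M] [PartialOrder M] [IsOrderedAddMonoid M]

theorem exists_nsmul_le_le_succ_nsmul_of_mul_self_le (h0 : ∀ z : M, 0 ≤ z) {n N : ℕ}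
    (hn : 0 < n) (hN : n * n ≤ N) (y : M) :
    ∃ x : M, n • x ≤ N • y ∧ N • y ≤ (n + 1) • x := by
  refine ⟨(N / n) • y, ?_, ?_⟩
  · rw [← mul_nsmul']
    exact nsmul_le_nsmul_left (h0 y) (Nat.mul_div_le N n)
  · rw [← mul_nsmul']
    exact nsmul_le_nsmul_left (h0 y) (Nat.le_succ_mul_div_of_mul_self_le hn hN)

theorem exists_nsmul_le_le_succ_nsmul (h0 : ∀ z : M, 0 ≤ z) {d : ℕ} (hd : 1 < d)
    (hdiv : ∀ a : M, ∃ x, a = d • x) (a : M) {n : ℕ} (hn : 0 < n) :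
    ∃ x : M, n • x ≤ a ∧ a ≤ (n + 1) • x := by
  obtain ⟨y, rfl⟩ := exists_eq_pow_nsmul hdiv (n * n) a
  exact exists_nsmul_le_le_succ_nsmul_of_mul_self_le h0 hn (Nat.lt_pow_self hd).le y

theorem nearlyUnperforated_of_cancel_nsmul {d : ℕ} (hd : 1 < d)
    (hcancel : ∀ a b : M, d • a ≤ d • b → a ≤ b) : NearlyUnperforated M := by
  rintro a b ⟨k₀, hk₀⟩
  exact le_of_pow_nsmul_le_pow_nsmul hcancel k₀ (hk₀ _ (Nat.lt_pow_self hd).le)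

theorem nsmul_le_nsmul_of_succ_nsmul_le (h0 : ∀ z : M, 0 ≤ z) {a b : M} {k : ℕ}
    (hab : (k + 1) • a ≤ k • b) {m : ℕ} (hm : k * (k + 1) ≤ m) : m • a ≤ m • b := by
  set j := m / (k + 1)
  have hkj : k ≤ j := (Nat.le_div_iff_mul_le k.succ_pos).2 hm
  have hjm : j * (k + 1) ≤ m := Nat.div_mul_le_self m (k + 1)
  have hmj : m ≤ (j + 1) * (k + 1) := (Nat.lt_mul_div_succ m k.succ_pos).le.trans_eq (mul_comm _ _)
  calc m • a ≤ ((j + 1) * (k + 1)) • a := nsmul_le_nsmul_left (h0 a) hmj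
    _ = (j + 1) • (k + 1) • a := mul_nsmul' a _ _
    _ ≤ (j + 1) • k • b := nsmul_le_nsmul_right hab _
    _ = ((j + 1) * k) • b := (mul_nsmul' b _ _).symm
    _ ≤ m • b := nsmul_le_nsmul_left (h0 b) (by nlinarith)

theorem NearlyUnperforated.almostUnperforated (h0 : ∀ z : M, 0 ≤ z)
    (h : NearlyUnperforated M) : AlmostUnperforated M := by
  rintro a b ⟨k, hk⟩
  exact h a b ⟨k * (k + 1), fun m hm => nsmul_le_nsmul_of_succ_nsmul_le h0 hk hm⟩

end PositivelyOrdered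

/-- Let `M` be a positively ordered monoid and let `d ≥ 2`.
(1) If every element of `M` is divisible by `d`, then for every `a ∈ M` and
every `n ≥ 1` there is `x` with `n•x ≤ a ≤ (n+1)•x`.
(2) If `M` is `d`-unperforated, then `M` is nearly unperforated, and in
particular almost unperforated. -/
theorem stmt6 {M : Type*} [AddCommMonoid M] [PartialOrder M] [IsOrderedAddMonoid M] (h0 : ∀ z : M, 0 ≤ z)
    (d : ℕ) (hd : 2 ≤ d) :
    ((∀ a : M, ∃ x : M, a = d • x) →
      ∀ a : M, ∀ n : ℕ, 1 ≤ n → ∃ x : M, n • x ≤ a ∧ a ≤ (n + 1) • x) ∧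
    ((∀ a b : M, d • a ≤ d • b → a ≤ b) →
      NearlyUnperforated M ∧ AlmostUnperforated M) := by
  refine ⟨fun hdiv a n hn => exists_nsmul_le_le_succ_nsmul h0 hd hdiv a hn, fun hun => ?_⟩
  have hnearly := nearlyUnperforated_of_cancel_nsmul hd hun
  exact ⟨hnearly, hnearly.almostUnperforated h0⟩
end

section
/- Let S be a simple Cu-semigroup with S ≠ {0}. Then the following are equivalent: (1) S is stably finite; (2) every compact element of S is finite; (3) no element of S is both compact and a greatest element of S; (4) there exists a functional λ on S taking a value other than 0 and ∞ at some element of S. -/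
open scoped ENNReal

/-- The (sequential) way-below relation: `a ≪ b` if for every increasing
sequence `f` with a supremum `s` such that `b ≤ s`, some `f n` dominates `a`. -/
def CuWayBelow {S : Type*} [Preorder S] (a b : S) : Prop :=
  ∀ f : ℕ → S, Monotone f → ∀ s : S, IsLUB (Set.range f) s → b ≤ s → ∃ n : ℕ, a ≤ f n

/-- An abstract Cu-semigroup: a positively ordered monoid satisfying the
axioms (O1)-(O4). -/
structure IsCuSemigroup (S : Type*) [AddCommMonoid S] [PartialOrder S] : Prop where
  /-- addition is order-preserving -/
  add_le_add : ∀ a b c : S, a ≤ b → a + c ≤ b + c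
  /-- `0` is the least element -/
  zero_le : ∀ a : S, 0 ≤ a
  /-- (O1) every increasing sequence has a supremum -/
  O1 : ∀ f : ℕ → S, Monotone f → ∃ s : S, IsLUB (Set.range f) s
  /-- (O2) every element is the supremum of a rapidly increasing sequence -/
  O2 : ∀ a : S, ∃ f : ℕ → S, (∀ n : ℕ, CuWayBelow (f n) (f (n + 1))) ∧ IsLUB (Set.range f) a
  /-- (O3) way-below is additive -/
  O3 : ∀ a' a b' b : S, CuWayBelow a' a → CuWayBelow b' b → CuWayBelow (a' + b') (a + b)
  /-- (O4) suprema of increasing sequences are additive -/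
  O4 : ∀ f g : ℕ → S, Monotone f → Monotone g → ∀ s t : S, IsLUB (Set.range f) s →
    IsLUB (Set.range g) t → IsLUB (Set.range (fun n => f n + g n)) (s + t)

/-- A functional on a Cu-semigroup: an additive, order-preserving map to
`[0,∞]` preserving `0` and suprema of increasing sequences. -/
structure IsCuFunctional {S : Type*} [AddCommMonoid S] [PartialOrder S] (l : S → ℝ≥0∞) : Prop where
  map_zero : l 0 = 0
  map_add : ∀ a b : S, l (a + b) = l a + l b
  mono : ∀ a b : S, a ≤ b → l a ≤ l b
  map_lub : ∀ f : ℕ → S, Monotone f → ∀ s : S, IsLUB (Set.range f) s → l s = ⨆ n : ℕ, l (f n)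

/-- An ideal of a Cu-semigroup: an order-hereditary submonoid closed under
suprema of increasing sequences. -/
structure IsCuIdeal {S : Type*} [AddCommMonoid S] [PartialOrder S] (I : Set S) : Prop where
  zero_mem : (0 : S) ∈ I
  add_mem : ∀ a b : S, a ∈ I → b ∈ I → a + b ∈ I
  mem_of_le : ∀ a b : S, a ≤ b → b ∈ I → a ∈ I
  lub_mem : ∀ f : ℕ → S, Monotone f → (∀ n : ℕ, f n ∈ I) → ∀ s : S, IsLUB (Set.range f) s → s ∈ I

/-- A Cu-semigroup is simple if its only ideals are `{0}` and the whole
semigroup. -/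
def CuSimple (S : Type*) [AddCommMonoid S] [PartialOrder S] : Prop :=
  ∀ I : Set S, IsCuIdeal I → I = {0} ∨ I = Set.univ

/-! (1) ⇒ (2) ⇒ (3) are immediate. For (3) ⇒ (1): if `a + c = a` with `c ≠ 0`, then `a`
dominates every multiple of `c`; in a simple Cu-semigroup the supremum of the multiples of a
nonzero element is the greatest element, so `a ≪ b ≤ a` makes `a` a compact greatest element.
For (4) ⇒ (1): the zero set of `λ`, and the set of elements all of whose way-below elements
have finite value, are ideals, so `λ` is faithful and finite way below everything, and
`x ≪ y`, `x + c = x` force `λ c = 0`.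

For (1) ⇒ (4), pick `u ≠ 0` with `u ≪ d`. Stable finiteness rules out
`(n + 1) • u + z ≤ n • u + z` on the order ideal generated by `u`, which is what the
Goodearl–Handelman construction of a state `φ` with `φ u = 1` needs: by Hahn–Banach, `t • [u] ↦ t`
extends to a linear map on formal real combinations of elements, dominated by the sublinear
functional `v ↦ inf {r | v ≤ r • [u] stably}`. Extended by `∞` off the order ideal and regularized
as `λ x = ⨆ z ≪ x, φ z`, it becomes a functional with `1 ≤ λ d ≤ φ d < ∞`. -/

open Finsupp Filter Topology Pointwise

section StableOrder

variable {M : Type*} [AddCommMonoid M] [Preorder M]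

def StablyLE (x y : M) : Prop := ∃ z, x + z ≤ y + z

theorem StablyLE.of_le {x y : M} (h : x ≤ y) : StablyLE x y := ⟨0, by simpa⟩

theorem StablyLE.of_add_right {x y w : M} (h : StablyLE (x + w) (y + w)) : StablyLE x y := by
  obtain ⟨z, hz⟩ := h
  exact ⟨w + z, by simpa only [add_assoc] using hz⟩

variable [IsOrderedAddMonoid M]

theorem nsmul_add_le_nsmul_add {x y z : M} (h : x + z ≤ y + z) (n : ℕ) :
    n • x + z ≤ n • y + z := by
  induction n with
  | zero => simp
  | succ n ih =>
    calc (n + 1) • x + z = (x + z) + n • x := by rw [succ_nsmul]; abel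
      _ ≤ (y + z) + n • x := add_le_add_left h _
      _ = y + (n • x + z) := by abel
      _ ≤ y + (n • y + z) := add_le_add_right ih _
      _ = (n + 1) • y + z := by rw [succ_nsmul]; abel

namespace StablyLE

variable {x y w x' y' : M}

theorem trans (h : StablyLE x y) (h' : StablyLE y w) : StablyLE x w := by
  obtain ⟨z, hz⟩ := h
  obtain ⟨z', hz'⟩ := h'
  refine ⟨z + z', ?_⟩
  calc x + (z + z') = (x + z) + z' := by abel
    _ ≤ (y + z) + z' := add_le_add_left hz _
    _ = (y + z') + z := by abel
    _ ≤ (w + z') + z := add_le_add_left hz' _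
    _ = w + (z + z') := by abel

theorem add (h : StablyLE x y) (h' : StablyLE x' y') : StablyLE (x + x') (y + y') := by
  obtain ⟨z, hz⟩ := h
  obtain ⟨z', hz'⟩ := h'
  refine ⟨z + z', ?_⟩
  calc x + x' + (z + z') = (x + z) + (x' + z') := by abel
    _ ≤ (y + z) + (y' + z') := add_le_add hz hz'
    _ = y + y' + (z + z') := by abel

theorem nsmul (h : StablyLE x y) (n : ℕ) : StablyLE (n • x) (n • y) :=
  let ⟨z, hz⟩ := h
  ⟨z, nsmul_add_le_nsmul_add hz n⟩

end StablyLE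

end StableOrder

theorem Finsupp.smul_le_floor_div_smul_add_abs {α : Type*} (v : α →₀ ℝ) {c : ℝ} (hc : 0 ≤ c)
    {b : ℕ} (hb : 0 < b) :
    c • v ≤ (⌊c * b⌋₊ / (b : ℝ)) • v + (1 / (b : ℝ)) • v.mapRange abs abs_zero := by
  have hbR : (0 : ℝ) < b := by exact_mod_cast hb
  have h₁ : (⌊c * b⌋₊ : ℝ) / b ≤ c := by
    rw [div_le_iff₀ hbR]
    exact Nat.floor_le (by positivity)
  have h₂ : c - 1 / b ≤ (⌊c * b⌋₊ : ℝ) / b := by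
    rw [sub_le_iff_le_add, ← add_div, le_div_iff₀ hbR]
    exact (Nat.lt_floor_add_one _).le
  refine Finsupp.le_def.mpr fun x => ?_
  simp only [Finsupp.coe_add, Finsupp.coe_smul, Pi.add_apply, Pi.smul_apply, smul_eq_mul,
    Finsupp.mapRange_apply]
  nlinarith [le_abs_self (v x), neg_abs_le (v x)]

namespace StateExtension

variable {M : Type*} [AddCommMonoid M] [Preorder M] (u : M)

/-- `r ∈ bounds u v` certifies `v ≤ r • [u]`: after clearing the denominator `k`, `k • v` is
dominated by a formal difference `P - Q` of elements of `M` whose sums satisfy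
`∑ P + s • u ≤ ∑ Q + s' • u` stably, with `r = (s' - s) / k`. -/
def bounds (v : M →₀ ℝ) : Set ℝ :=
  {r | ∃ (k : ℕ) (P Q : M →₀ ℕ) (s s' : ℕ), 0 < k ∧ (∀ x, k * v x ≤ P x - Q x) ∧
    StablyLE (linearCombination ℕ id P + s • u) (linearCombination ℕ id Q + s' • u) ∧
    r = (s' - s) / k}

variable {u}

theorem zero_mem_bounds_of_stablyLE {v : M →₀ ℝ} {P Q : M →₀ ℕ} (hv : ∀ x, v x ≤ P x - Q x)
    (h : StablyLE (linearCombination ℕ id P) (linearCombination ℕ id Q)) : (0 : ℝ) ∈ bounds u v :=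
  ⟨1, P, Q, 0, 0, one_pos, by simpa using hv, by simpa using h, by simp⟩

theorem div_mem_bounds {v : M →₀ ℝ} {r : ℝ} (h : r ∈ bounds u v) {b : ℕ} (hb : 0 < b) :
    r / b ∈ bounds u ((b : ℝ)⁻¹ • v) := by
  obtain ⟨k, P, Q, s, t, hk, hv, hPQ, rfl⟩ := h
  refine ⟨k * b, P, Q, s, t, Nat.mul_pos hk hb, fun x => ?_, hPQ, ?_⟩
  · have hb' : (b : ℝ) ≠ 0 := by positivity
    simpa [mul_assoc, mul_inv_cancel_left₀ hb'] using hv x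
  · push_cast
    rw [div_div]

theorem bounds_anti {v w : M →₀ ℝ} (h : v ≤ w) : bounds u w ⊆ bounds u v := by
  rintro r ⟨k, P, Q, s, t, hk, hw, hPQ, rfl⟩
  exact ⟨k, P, Q, s, t, hk, fun x => le_trans (by gcongr; exact Finsupp.le_def.mp h x) (hw x),
    hPQ, rfl⟩

theorem bounds_nonempty (hunit : ∀ x : M, ∃ n : ℕ, x ≤ n • u) (v : M →₀ ℝ) :
    (bounds u v).Nonempty := by
  let P : M →₀ ℕ := v.mapRange (fun t => ⌈t⌉₊) (by simp)
  obtain ⟨n, hn⟩ := hunit (linearCombination ℕ id P)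
  exact ⟨n, 1, P, 0, 0, n, one_pos, fun x => by simpa [P] using Nat.le_ceil (v x),
    StablyLE.of_le (by simpa using hn), by simp⟩

theorem one_mem_bounds_single : (1 : ℝ) ∈ bounds u (single u 1) :=
  ⟨1, single u 1, 0, 0, 1, one_pos, fun x => by
    rcases eq_or_ne u x with rfl | h <;> simp [*],
    StablyLE.of_le (by simp), by simp⟩

theorem neg_one_mem_bounds_neg_single : (-1 : ℝ) ∈ bounds u (-single u 1) :=
  ⟨1, 0, single u 1, 1, 0, one_pos, fun x => by
    rcases eq_or_ne u x with rfl | h <;> simp [*],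
    StablyLE.of_le (by simp), by simp⟩

variable (u) in
noncomputable def unitBound (v : M →₀ ℝ) : ℝ := sInf (bounds u v)

theorem unitBound_le (hb : ∀ v : M →₀ ℝ, BddBelow (bounds u v)) {v : M →₀ ℝ} {r : ℝ}
    (h : r ∈ bounds u v) : unitBound u v ≤ r :=
  csInf_le (hb v) h

theorem le_unitBound (hn : ∀ v : M →₀ ℝ, (bounds u v).Nonempty) {v : M →₀ ℝ} {c : ℝ}
    (h : ∀ r ∈ bounds u v, c ≤ r) : c ≤ unitBound u v :=
  le_csInf (hn v) h

theorem unitBound_mono (hn : ∀ v : M →₀ ℝ, (bounds u v).Nonempty)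
    (hb : ∀ v : M →₀ ℝ, BddBelow (bounds u v)) {v w : M →₀ ℝ} (h : v ≤ w) :
    unitBound u v ≤ unitBound u w :=
  csInf_le_csInf (hb v) (hn w) (bounds_anti h)

variable [IsOrderedAddMonoid M]

theorem add_mem_bounds {v v' : M →₀ ℝ} {r r' : ℝ} (h : r ∈ bounds u v) (h' : r' ∈ bounds u v') :
    r + r' ∈ bounds u (v + v') := by
  obtain ⟨k, P, Q, s, t, hk, hv, hPQ, rfl⟩ := h
  obtain ⟨k', P', Q', s', t', hk', hv', hPQ', rfl⟩ := h'
  refine ⟨k * k', k' • P + k • P', k' • Q + k • Q', k' * s + k * s', k' * t + k * t',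
    Nat.mul_pos hk hk', fun x => ?_, ?_, ?_⟩
  · have := hv x
    have := hv' x
    simp only [Finsupp.add_apply, Finsupp.smul_apply, smul_eq_mul]
    push_cast
    nlinarith
  · convert (hPQ.nsmul k').add (hPQ'.nsmul k) using 1 <;>
      simp only [map_add, map_nsmul, nsmul_add, add_nsmul, mul_nsmul'] <;> abel
  · field_simp
    push_cast
    ring

theorem nsmul_mem_bounds {v : M →₀ ℝ} {r : ℝ} (h : r ∈ bounds u v) (n : ℕ) :
    n * r ∈ bounds u (n • v) := by
  induction n with
  | zero =>
    simpa using zero_mem_bounds_of_stablyLE (P := 0) (Q := 0) (by simp) (StablyLE.of_le le_rfl)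
  | succ n ih => simpa [succ_nsmul, add_mul] using add_mem_bounds ih h

theorem nonneg_of_mem_bounds_zero (hpos : ∀ x : M, 0 ≤ x)
    (hu : ∀ n : ℕ, ¬ StablyLE ((n + 1) • u) (n • u)) {r : ℝ} (h : r ∈ bounds u 0) : 0 ≤ r := by
  obtain ⟨k, P, Q, s, t, hk, hv, hPQ, rfl⟩ := h
  have hQP : Q ≤ P := Finsupp.le_def.mpr fun x => by exact_mod_cast (by simpa using hv x)
  obtain ⟨R, rfl⟩ := exists_add_of_le hQP
  suffices s ≤ t by
    have : (s : ℝ) ≤ t := by exact_mod_cast this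
    exact div_nonneg (by linarith) k.cast_nonneg
  by_contra! hts
  have hst : StablyLE ((t + 1) • u + linearCombination ℕ id (Q + R))
      (linearCombination ℕ id (Q + R) + s • u) :=
    .of_le <| by
      rw [add_comm _ (s • u)]
      exact add_le_add_left (nsmul_le_nsmul_left (hpos u) hts) _
  have htw : StablyLE (linearCombination ℕ id Q + t • u) (t • u + linearCombination ℕ id (Q + R)) :=
    .of_le <| by
      rw [map_add, add_comm _ (t • u), ← add_assoc]
      exact le_add_of_nonneg_right (hpos _)
  exact hu t ((hst.trans hPQ).trans htw).of_add_right

theorem bddBelow_bounds (hpos : ∀ x : M, 0 ≤ x) (hunit : ∀ x : M, ∃ n : ℕ, x ≤ n • u)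
    (hu : ∀ n : ℕ, ¬ StablyLE ((n + 1) • u) (n • u)) (v : M →₀ ℝ) : BddBelow (bounds u v) := by
  obtain ⟨r', hr'⟩ := bounds_nonempty hunit (-v)
  refine ⟨-r', fun r hr => ?_⟩
  have := nonneg_of_mem_bounds_zero hpos hu (by simpa using add_mem_bounds hr hr')
  linarith

theorem unitBound_add_le (hn : ∀ v : M →₀ ℝ, (bounds u v).Nonempty)
    (hb : ∀ v : M →₀ ℝ, BddBelow (bounds u v)) (v w : M →₀ ℝ) :
    unitBound u (v + w) ≤ unitBound u v + unitBound u w := by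
  suffices unitBound u (v + w) - unitBound u w ≤ unitBound u v by linarith
  refine le_unitBound hn fun r hr => ?_
  suffices unitBound u (v + w) - r ≤ unitBound u w by linarith
  refine le_unitBound hn fun r' hr' => ?_
  have := unitBound_le hb (add_mem_bounds hr hr')
  linarith

theorem unitBound_natCast_div_smul_le (hn : ∀ v : M →₀ ℝ, (bounds u v).Nonempty)
    (hb : ∀ v : M →₀ ℝ, BddBelow (bounds u v)) (v : M →₀ ℝ) (a : ℕ) {b : ℕ} (hb0 : 0 < b) :
    unitBound u (((a : ℝ) / b) • v) ≤ (a / b) * unitBound u v := by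
  have hsub : ((a : ℝ) / b) • bounds u v ⊆ bounds u (((a : ℝ) / b) • v) := by
    rintro _ ⟨r, hr, rfl⟩
    have := nsmul_mem_bounds (div_mem_bounds hr hb0) a
    rw [← Nat.cast_smul_eq_nsmul ℝ, smul_smul, ← div_eq_mul_inv, mul_div_assoc'] at this
    simpa [mul_div_assoc', div_mul_eq_mul_div] using this
  rw [unitBound, unitBound, ← smul_eq_mul, ← Real.sInf_smul_of_nonneg (by positivity)]
  exact csInf_le_csInf (hb _) ((hn v).smul_set) hsub

theorem unitBound_smul_le (hn : ∀ v : M →₀ ℝ, (bounds u v).Nonempty)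
    (hb : ∀ v : M →₀ ℝ, BddBelow (bounds u v)) (v : M →₀ ℝ) {c : ℝ} (hc : 0 ≤ c) :
    unitBound u (c • v) ≤ c * unitBound u v := by
  set av : M →₀ ℝ := v.mapRange abs abs_zero
  have hle : ∀ b : ℕ, 0 < b →
      unitBound u (c • v) ≤ ⌊c * b⌋₊ / b * unitBound u v + 1 / b * unitBound u av := by
    intro b hb0
    have h₁ := unitBound_natCast_div_smul_le hn hb v ⌊c * b⌋₊ hb0
    have h₂ := unitBound_natCast_div_smul_le hn hb av 1 hb0
    rw [Nat.cast_one] at h₂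
    have := (unitBound_mono hn hb (v.smul_le_floor_div_smul_add_abs hc hb0)).trans
      (unitBound_add_le hn hb _ _)
    linarith
  have hlim : Tendsto (fun b : ℕ => ⌊c * b⌋₊ / (b : ℝ) * unitBound u v + 1 / b * unitBound u av)
      atTop (𝓝 (c * unitBound u v + 0 * unitBound u av)) :=
    (((tendsto_nat_floor_mul_div_atTop hc).comp tendsto_natCast_atTop_atTop).mul_const _).add
      (tendsto_one_div_atTop_nhds_zero_nat.mul_const _)
  rw [zero_mul, add_zero] at hlim
  exact ge_of_tendsto hlim (eventually_atTop.mpr ⟨1, hle⟩)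

theorem unitBound_smul (hn : ∀ v : M →₀ ℝ, (bounds u v).Nonempty)
    (hb : ∀ v : M →₀ ℝ, BddBelow (bounds u v)) {c : ℝ} (hc : 0 < c) (v : M →₀ ℝ) :
    unitBound u (c • v) = c * unitBound u v := by
  refine (unitBound_smul_le hn hb v hc.le).antisymm ?_
  have := unitBound_smul_le hn hb (c • v) (inv_nonneg.mpr hc.le)
  rw [inv_smul_smul₀ hc.ne'] at this
  rwa [← le_div_iff₀' hc, div_eq_inv_mul]

theorem le_unitBound_smul_single (hpos : ∀ x : M, 0 ≤ x)
    (hu : ∀ n : ℕ, ¬ StablyLE ((n + 1) • u) (n • u)) (hn : ∀ v : M →₀ ℝ, (bounds u v).Nonempty)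
    (hb : ∀ v : M →₀ ℝ, BddBelow (bounds u v)) (t : ℝ) : t ≤ unitBound u (t • single u 1) := by
  have h_one : 1 ≤ unitBound u (single u 1) := le_unitBound hn fun r hr => by
    have := nonneg_of_mem_bounds_zero hpos hu
      (by simpa using add_mem_bounds hr neg_one_mem_bounds_neg_single)
    linarith
  have h_neg_one : -1 ≤ unitBound u (-single u 1) := le_unitBound hn fun r hr => by
    have := nonneg_of_mem_bounds_zero hpos hu
      (by simpa using add_mem_bounds hr one_mem_bounds_single)
    linarith
  rcases lt_trichotomy t 0 with ht | rfl | ht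
  · rw [← neg_neg t, neg_smul, ← smul_neg, unitBound_smul hn hb (neg_pos.mpr ht)]
    nlinarith
  · simpa using le_unitBound hn fun r hr => nonneg_of_mem_bounds_zero hpos hu hr
  · rw [unitBound_smul hn hb ht]
    nlinarith

end StateExtension

open StateExtension in
theorem exists_monotone_addMonoidHom_map_eq_one {M : Type*} [AddCommMonoid M] [Preorder M]
    [IsOrderedAddMonoid M] (hpos : ∀ x : M, 0 ≤ x) {u : M}
    (hunit : ∀ x : M, ∃ n : ℕ, x ≤ n • u) (hu : ∀ n : ℕ, ¬ StablyLE ((n + 1) • u) (n • u)) :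
    ∃ φ : M →+ ℝ, Monotone φ ∧ φ u = 1 := by
  have hn := bounds_nonempty hunit
  have hb := bddBelow_bounds hpos hunit hu
  have hδ : single u (1 : ℝ) ≠ 0 := by simp
  obtain ⟨g, hg_eq, hg_le⟩ := exists_extension_of_le_sublinear
    (LinearPMap.mkSpanSingleton (single u (1 : ℝ)) (1 : ℝ) hδ) (unitBound u)
    (fun c hc v => unitBound_smul hn hb hc v) (unitBound_add_le hn hb) <| by
      rintro ⟨_, hv⟩
      obtain ⟨t, rfl⟩ := Submodule.mem_span_singleton.mp hv
      rw [LinearPMap.mkSpanSingleton'_apply, RingHom.id_apply, smul_eq_mul, mul_one]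
      exact le_unitBound_smul_single hpos hu hn hb t
  let cast : (M →₀ ℕ) →+ (M →₀ ℝ) := mapRange.addMonoidHom (Nat.castAddMonoidHom ℝ)
  have hcast : ∀ m : M, cast (single m 1) = single m 1 := by simp [cast]
  have hg_mono : ∀ P Q : M →₀ ℕ, linearCombination ℕ id P ≤ linearCombination ℕ id Q →
      g (cast P) ≤ g (cast Q) := fun P Q h => by
    have hv : ∀ x, (cast P - cast Q) x ≤ P x - Q x := fun x => by simp [cast]
    have := (hg_le _).trans (unitBound_le hb (zero_mem_bounds_of_stablyLE hv (.of_le h)))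
    rwa [map_sub, sub_nonpos] at this
  refine ⟨AddMonoidHom.mk' (fun m => g (single m 1)) fun m m' => ?_, fun m m' h => ?_, ?_⟩
  · have h₁ := hg_mono (single (m + m') 1) (single m 1 + single m' 1) (by simp)
    have h₂ := hg_mono (single m 1 + single m' 1) (single (m + m') 1) (by simp)
    simp only [map_add, hcast] at h₁ h₂
    exact h₁.antisymm h₂
  · simpa [hcast] using hg_mono (single m 1) (single m' 1) (by simpa using h)
  · exact (hg_eq _).trans (LinearPMap.mkSpanSingleton_apply ℝ ℝ hδ 1)

section Extension

variable {M : Type*} [AddCommMonoid M] [Preorder M] [IsOrderedAddMonoid M]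

def AddSubmonoid.dominatedBy (u : M) : AddSubmonoid M where
  carrier := {x | ∃ n : ℕ, x ≤ n • u}
  zero_mem' := ⟨0, by simp⟩
  add_mem' := by
    rintro x y ⟨m, hx⟩ ⟨n, hy⟩
    exact ⟨m + n, add_nsmul u m n ▸ add_le_add hx hy⟩

theorem exists_addMonoidHom_ennreal_extend (hpos : ∀ x : M, 0 ≤ x) {I : AddSubmonoid M}
    (hI : ∀ x y : M, x ≤ y → y ∈ I → x ∈ I) {φ : I →+ ℝ} (hφ : Monotone φ) :
    ∃ Φ : M →+ ℝ≥0∞, Monotone Φ ∧ ∀ x (hx : x ∈ I), Φ x = ENNReal.ofReal (φ ⟨x, hx⟩) := by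
  classical
  have hφ_nonneg : ∀ x, 0 ≤ φ x := fun x => map_zero φ ▸ hφ (hpos (x : M))
  have hI_add : ∀ x y, x + y ∈ I → x ∈ I := fun x y =>
    hI x _ (le_add_of_nonneg_right (hpos y))
  let Φ : M → ℝ≥0∞ := fun x => if hx : x ∈ I then ENNReal.ofReal (φ ⟨x, hx⟩) else ⊤
  have hΦ_zero : Φ 0 = 0 := by
    simp only [Φ, dif_pos I.zero_mem]
    exact ENNReal.ofReal_eq_zero.mpr (map_zero φ).le
  have hΦ_add : ∀ x y, Φ (x + y) = Φ x + Φ y := fun x y => by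
    by_cases hx : x ∈ I
    · by_cases hy : y ∈ I
      · simp only [Φ, dif_pos hx, dif_pos hy, dif_pos (I.add_mem hx hy)]
        rw [← ENNReal.ofReal_add (hφ_nonneg _) (hφ_nonneg _), ← map_add]
        rfl
      · have hxy : x + y ∉ I := fun h => hy (hI_add y x (add_comm x y ▸ h))
        simp [Φ, hxy, hy]
    · have hxy : x + y ∉ I := fun h => hx (hI_add x y h)
      simp [Φ, hxy, hx]
  have hΦ_mono : Monotone Φ := fun x y hxy => by
    by_cases hy : y ∈ I
    · simp only [Φ, dif_pos hy, dif_pos (hI x y hxy hy)]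
      exact ENNReal.ofReal_le_ofReal (hφ hxy)
    · simp [Φ, hy]
  exact ⟨⟨⟨Φ, hΦ_zero⟩, hΦ_add⟩, hΦ_mono, fun x hx => dif_pos hx⟩

end Extension

section WayBelow

variable {S : Type*} [Preorder S]

theorem CuWayBelow.le {a b : S} (h : CuWayBelow a b) : a ≤ b := by
  obtain ⟨n, hn⟩ := h (fun _ => b) monotone_const b (by simp [isLUB_singleton]) le_rfl
  exact hn

theorem CuWayBelow.trans_le {a b c : S} (h : CuWayBelow a b) (hbc : b ≤ c) : CuWayBelow a c :=
  fun f hf s hs hc => h f hf s hs (hbc.trans hc)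

theorem LE.le.trans_cuWayBelow {a b c : S} (hab : a ≤ b) (h : CuWayBelow b c) :
    CuWayBelow a c :=
  fun f hf s hs hc => (h f hf s hs hc).imp fun _ => hab.trans

theorem monotone_of_cuWayBelow_succ {f : ℕ → S} (hf : ∀ n, CuWayBelow (f n) (f (n + 1))) :
    Monotone f :=
  monotone_nat_of_le_succ fun n => (hf n).le

end WayBelow

theorem IsCuFunctional.isCuIdeal_setOf_eq_zero {S : Type*} [AddCommMonoid S] [PartialOrder S]
    {lam : S → ℝ≥0∞} (hlam : IsCuFunctional lam) : IsCuIdeal {w | lam w = 0} where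
  zero_mem := hlam.map_zero
  add_mem x y hx hy := by simp_all [hlam.map_add]
  mem_of_le x y hxy hy := le_zero_iff.mp (hy ▸ hlam.mono x y hxy)
  lub_mem f hf hmem s hs := by simp_all [hlam.map_lub f hf s hs]

namespace IsCuSemigroup

variable {S : Type*} [AddCommMonoid S] [PartialOrder S]

theorem isOrderedAddMonoid (hS : IsCuSemigroup S) : IsOrderedAddMonoid S :=
  { add_le_add_left := fun a b h c => hS.add_le_add a b c h }

theorem zero_cuWayBelow (hS : IsCuSemigroup S) (b : S) : CuWayBelow 0 b :=
  fun _ _ _ _ _ => ⟨0, hS.zero_le _⟩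

theorem nsmul_cuWayBelow_nsmul (hS : IsCuSemigroup S) {a b : S} (h : CuWayBelow a b) (n : ℕ) :
    CuWayBelow (n • a) (n • b) := by
  induction n with
  | zero => simpa using hS.zero_cuWayBelow 0
  | succ n ih => simpa only [succ_nsmul] using hS.O3 _ _ _ _ ih h

theorem exists_cuWayBelow_of_isLUB (hS : IsCuSemigroup S) {z s : S} (hz : CuWayBelow z s)
    {f : ℕ → S} (hf : Monotone f) (hs : IsLUB (Set.range f) s) : ∃ n, CuWayBelow z (f n) := by
  obtain ⟨g, hg, hgs⟩ := hS.O2 s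
  obtain ⟨k, hk⟩ := hz g (monotone_of_cuWayBelow_succ hg) s hgs le_rfl
  obtain ⟨n, hn⟩ := hg (k + 1) f hf s hs (hgs.1 (Set.mem_range_self (k + 2)))
  exact ⟨n, (hk.trans_cuWayBelow (hg k)).trans_le hn⟩

theorem exists_cuWayBelow_add_le (hS : IsCuSemigroup S) {z x y : S}
    (hz : CuWayBelow z (x + y)) :
    ∃ x' y', CuWayBelow x' x ∧ CuWayBelow y' y ∧ z ≤ x' + y' := by
  have := hS.isOrderedAddMonoid
  obtain ⟨f, hf, hfx⟩ := hS.O2 x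
  obtain ⟨g, hg, hgy⟩ := hS.O2 y
  have hfm := monotone_of_cuWayBelow_succ hf
  have hgm := monotone_of_cuWayBelow_succ hg
  obtain ⟨n, hn⟩ := hz _ (hfm.add hgm) _ (hS.O4 f g hfm hgm x y hfx hgy) le_rfl
  exact ⟨f n, g n, (hf n).trans_le (hfx.1 ⟨n + 1, rfl⟩), (hg n).trans_le (hgy.1 ⟨n + 1, rfl⟩),
    hn⟩

theorem exists_ne_zero_cuWayBelow (hS : IsCuSemigroup S) {a : S} (ha : a ≠ 0) :
    ∃ u, u ≠ 0 ∧ CuWayBelow u a := by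
  obtain ⟨f, hf, hfa⟩ := hS.O2 a
  obtain ⟨n, hn⟩ : ∃ n, f n ≠ 0 := by
    by_contra! h
    exact ha ((hfa.2 (by rintro _ ⟨n, rfl⟩; exact (h n).le)).antisymm (hS.zero_le a))
  exact ⟨f n, hn, (hf n).trans_le (hfa.1 ⟨n + 1, rfl⟩)⟩

theorem isCuIdeal_Iic (hS : IsCuSemigroup S) {s : S} (hs : s + s = s) : IsCuIdeal (Set.Iic s) where
  zero_mem := hS.zero_le s
  add_mem a b ha hb := by
    have := hS.isOrderedAddMonoid
    exact hs ▸ _root_.add_le_add ha hb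
  mem_of_le _ _ hab hb := hab.trans hb
  lub_mem _ _ hf _ ht := ht.2 (by rintro _ ⟨n, rfl⟩; exact hf n)

theorem isTop_of_isLUB_nsmul (hS : IsCuSemigroup S) (hsimple : CuSimple S) {u s : S}
    (hu : u ≠ 0) (hs : IsLUB (Set.range fun n : ℕ => n • u) s) : IsTop s := by
  have := hS.isOrderedAddMonoid
  have hmono : Monotone fun n : ℕ => n • u := fun _ _ h => nsmul_le_nsmul_left (hS.zero_le u) h
  have hss : s + s = s := by
    refine (hS.O4 _ _ hmono hmono s s hs hs).unique ⟨?_, fun c hc => hs.2 ?_⟩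
    · rintro _ ⟨n, rfl⟩
      simpa only [← add_nsmul] using hs.1 ⟨n + n, rfl⟩
    · rintro _ ⟨n, rfl⟩
      exact (le_add_of_nonneg_right (hS.zero_le _)).trans (hc ⟨n, rfl⟩)
  rcases hsimple _ (hS.isCuIdeal_Iic hss) with h | h
  · have hu_mem : u ∈ Set.Iic s := by simpa using hs.1 ⟨1, rfl⟩
    rw [h] at hu_mem
    exact absurd hu_mem hu
  · intro b
    rw [← Set.mem_Iic, h]
    exact Set.mem_univ b

theorem stablyFinite_of_not_exists_compact_top (hS : IsCuSemigroup S) (hsimple : CuSimple S)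
    (h : ¬ ∃ a : S, CuWayBelow a a ∧ ∀ b : S, b ≤ a) :
    ∀ a b : S, CuWayBelow a b → ∀ c : S, a + c = a → c = 0 := by
  have := hS.isOrderedAddMonoid
  intro a b hab c hc
  by_contra hc0
  have hmono : Monotone fun n : ℕ => n • c := fun _ _ h => nsmul_le_nsmul_left (hS.zero_le c) h
  obtain ⟨s, hs⟩ := hS.O1 _ hmono
  have hnc : ∀ n : ℕ, a + n • c = a := fun n => by
    induction n with
    | zero => simp
    | succ n ih => rw [succ_nsmul, ← add_assoc, ih, hc]
  have hsa : s ≤ a := hs.2 <| by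
    rintro _ ⟨n, rfl⟩
    exact (le_add_of_nonneg_left (hS.zero_le a)).trans_eq (hnc n)
  have htop : ∀ x, x ≤ a := fun x => (hS.isTop_of_isLUB_nsmul hsimple hc0 hs x).trans hsa
  exact h ⟨a, hab.trans_le (htop b), htop⟩

theorem isCuFunctional_iSup_cuWayBelow (hS : IsCuSemigroup S) (Φ : S →+ ℝ≥0∞)
    (hΦ : Monotone Φ) : IsCuFunctional fun x => ⨆ (z) (_ : CuWayBelow z x), Φ z where
  map_zero := le_zero_iff.mp <| iSup₂_le fun z hz => (hΦ hz.le).trans_eq (map_zero Φ)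
  map_add x y := by
    refine le_antisymm (iSup₂_le fun z hz => ?_) ?_
    · obtain ⟨x', y', hx', hy', hz'⟩ := hS.exists_cuWayBelow_add_le hz
      calc Φ z ≤ Φ x' + Φ y' := (map_add Φ x' y') ▸ hΦ hz'
        _ ≤ _ := _root_.add_le_add (le_iSup₂_of_le x' hx' le_rfl) (le_iSup₂_of_le y' hy' le_rfl)
    · refine ENNReal.biSup_add_biSup_le' ⟨0, hS.zero_cuWayBelow x⟩ ⟨0, hS.zero_cuWayBelow y⟩
        fun x' hx' y' hy' => ?_
      exact (map_add Φ x' y') ▸ le_iSup₂_of_le (x' + y') (hS.O3 _ _ _ _ hx' hy') le_rfl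
  mono x y hxy := iSup₂_mono' fun z hz => ⟨z, hz.trans_le hxy, le_rfl⟩
  map_lub f hf s hs := by
    refine le_antisymm (iSup₂_le fun z hz => ?_)
      (iSup_le fun n => iSup₂_mono' fun z hz => ⟨z, hz.trans_le (hs.1 ⟨n, rfl⟩), le_rfl⟩)
    obtain ⟨n, hn⟩ := hS.exists_cuWayBelow_of_isLUB hz hf hs
    exact le_iSup_of_le n (le_iSup₂_of_le z hn le_rfl)

theorem not_succ_nsmul_add_le (hS : IsCuSemigroup S)
    (hfin : ∀ a b : S, CuWayBelow a b → ∀ c : S, a + c = a → c = 0) {u d z : S} (hu : u ≠ 0)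
    (hud : CuWayBelow u d) {N : ℕ} (hz : z ≤ N • u) (n : ℕ) : ¬ (n + 1) • u + z ≤ n • u + z := by
  have := hS.isOrderedAddMonoid
  intro h
  -- repeating the inequality `N + 1` times swallows `z ≤ N • u`
  have hq : ((N + 1) * n + N) • u + u ≤ ((N + 1) * n + N) • u :=
    calc ((N + 1) * n + N) • u + u = (N + 1) • ((n + 1) • u) := by
          rw [← succ_nsmul, smul_smul]; ring_nf
      _ ≤ (N + 1) • ((n + 1) • u) + z := le_add_of_nonneg_right (hS.zero_le z)
      _ ≤ (N + 1) • (n • u) + z := nsmul_add_le_nsmul_add h (N + 1)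
      _ ≤ (N + 1) • (n • u) + N • u := add_le_add_right hz _
      _ = ((N + 1) * n + N) • u := by rw [smul_smul, ← add_nsmul]
  exact hu <| hfin _ _ (hS.nsmul_cuWayBelow_nsmul hud _) u <|
    hq.antisymm (le_add_of_nonneg_right (hS.zero_le u))

theorem exists_isCuFunctional_of_stablyFinite (hS : IsCuSemigroup S) (hsimple : CuSimple S)
    (hnz : ∃ a : S, a ≠ 0) (hfin : ∀ a b : S, CuWayBelow a b → ∀ c : S, a + c = a → c = 0) :
    ∃ lam : S → ℝ≥0∞, IsCuFunctional lam ∧ ∃ a : S, lam a ≠ 0 ∧ lam a ≠ ∞ := by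
  have := hS.isOrderedAddMonoid
  obtain ⟨a, ha⟩ := hnz
  obtain ⟨d, hd, hda⟩ := hS.exists_ne_zero_cuWayBelow ha
  obtain ⟨u, hu, hud⟩ := hS.exists_ne_zero_cuWayBelow hd
  let I := AddSubmonoid.dominatedBy u
  have hmono : Monotone fun n : ℕ => n • u := fun _ _ h => nsmul_le_nsmul_left (hS.zero_le u) h
  obtain ⟨s, hs⟩ := hS.O1 _ hmono
  have hI : ∀ z x : S, CuWayBelow z x → z ∈ I := fun z x hz =>
    hz _ hmono s hs (hS.isTop_of_isLUB_nsmul hsimple hu hs x)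
  obtain ⟨φ, hφ, hφu⟩ := exists_monotone_addMonoidHom_map_eq_one (M := I) (u := ⟨u, hI u d hud⟩)
    (fun x => hS.zero_le x) (fun x => x.2.imp fun _ h => h)
    (fun n ⟨⟨z, N, hz⟩, h⟩ => hS.not_succ_nsmul_add_le hfin hu hud hz n h)
  obtain ⟨Φ, hΦ, hΦI⟩ := exists_addMonoidHom_ennreal_extend (I := I) (fun x => hS.zero_le x)
    (fun x y hxy hy => hy.imp fun _ => hxy.trans) hφ
  refine ⟨_, hS.isCuFunctional_iSup_cuWayBelow Φ hΦ, d, ?_, ?_⟩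
  · have h_one : Φ u = 1 := by rw [hΦI u (hI u d hud), hφu, ENNReal.ofReal_one]
    exact (zero_lt_one.trans_le (le_iSup₂_of_le u hud h_one.ge)).ne'
  · refine ne_top_of_le_ne_top ?_ (iSup₂_le fun z hz => hΦ hz.le)
    rw [hΦI d (hI d a hda)]
    exact ENNReal.ofReal_ne_top

theorem isCuIdeal_setOf_forall_cuWayBelow_ne_top (hS : IsCuSemigroup S) {lam : S → ℝ≥0∞}
    (hlam : IsCuFunctional lam) : IsCuIdeal {w | ∀ z, CuWayBelow z w → lam z ≠ ∞} where
  zero_mem z hz := ne_top_of_le_ne_top (hlam.map_zero ▸ ENNReal.zero_ne_top) (hlam.mono _ _ hz.le)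
  add_mem x y hx hy z hz := by
    obtain ⟨x', y', hx', hy', hz'⟩ := hS.exists_cuWayBelow_add_le hz
    refine ne_top_of_le_ne_top ?_ ((hlam.mono _ _ hz').trans_eq (hlam.map_add x' y'))
    exact ENNReal.add_ne_top.mpr ⟨hx x' hx', hy y' hy'⟩
  mem_of_le x y hxy hy z hz := hy z (hz.trans_le hxy)
  lub_mem f hf hmem s hs z hz := by
    obtain ⟨n, hn⟩ := hS.exists_cuWayBelow_of_isLUB hz hf hs
    exact hmem n z hn

theorem stablyFinite_of_isCuFunctional (hS : IsCuSemigroup S) (hsimple : CuSimple S)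
    {lam : S → ℝ≥0∞} (hlam : IsCuFunctional lam) {a : S} (ha₀ : lam a ≠ 0) (ha : lam a ≠ ∞) :
    ∀ x y : S, CuWayBelow x y → ∀ c : S, x + c = x → c = 0 := by
  intro x y hxy c hc
  have h_zero : {w | lam w = 0} = {0} :=
    (hsimple _ hlam.isCuIdeal_setOf_eq_zero).resolve_right fun h =>
      ha₀ (h.symm ▸ Set.mem_univ a : a ∈ {w | lam w = 0})
  have h_fin : {w | ∀ z, CuWayBelow z w → lam z ≠ ∞} = Set.univ := by
    refine (hsimple _ (hS.isCuIdeal_setOf_forall_cuWayBelow_ne_top hlam)).resolve_left fun h => ?_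
    have ha_mem : a ∈ {w | ∀ z, CuWayBelow z w → lam z ≠ ∞} := fun z hz =>
      ne_top_of_le_ne_top ha (hlam.mono _ _ hz.le)
    rw [h, Set.mem_singleton_iff] at ha_mem
    exact ha₀ (ha_mem ▸ hlam.map_zero)
  have hy : y ∈ {w | ∀ z, CuWayBelow z w → lam z ≠ ∞} := h_fin ▸ Set.mem_univ y
  have hx : lam x ≠ ∞ := hy x hxy
  have hc_zero : lam c = 0 := by
    have := hlam.map_add x c
    rw [hc] at this
    exact (ENNReal.add_right_inj hx).mp (this.symm.trans (add_zero _).symm)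
  exact (h_zero ▸ hc_zero : c ∈ ({0} : Set S))

end IsCuSemigroup

/-- Let `S` be a simple Cu-semigroup with `S ≠ {0}`.  The
following are equivalent:
(1) `S` is stably finite;
(2) every compact element of `S` is finite;
(3) no element of `S` is both compact and a greatest element;
(4) there is a functional on `S` taking a value other than `0` and `∞`. -/
theorem stmt11 {S : Type*} [AddCommMonoid S] [PartialOrder S]
    (hS : IsCuSemigroup S) (hsimple : CuSimple S) (hnz : ∃ a : S, a ≠ 0) :
    List.TFAE
      [ (∀ a b : S, CuWayBelow a b → ∀ c : S, a + c = a → c = 0),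
        (∀ a : S, CuWayBelow a a → ∀ c : S, a + c = a → c = 0),
        (¬ ∃ a : S, CuWayBelow a a ∧ ∀ b : S, b ≤ a),
        (∃ lam : S → ℝ≥0∞, IsCuFunctional lam ∧ ∃ a : S, lam a ≠ 0 ∧ lam a ≠ ∞) ] := by
  have := hS.isOrderedAddMonoid
  tfae_have 1 → 2 := fun h a ha => h a a ha
  tfae_have 2 → 3 := by
    rintro h ⟨a, ha, htop⟩
    obtain ⟨x, hx⟩ := hnz
    have ha₀ : a = 0 := h a ha a (le_antisymm (htop _) (le_add_of_nonneg_right (hS.zero_le a)))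
    exact hx (le_antisymm (ha₀ ▸ htop x) (hS.zero_le x))
  tfae_have 3 → 1 := hS.stablyFinite_of_not_exists_compact_top hsimple
  tfae_have 1 → 4 := hS.exists_isCuFunctional_of_stablyFinite hsimple hnz
  tfae_have 4 → 1 := fun ⟨_, hlam, _, ha₀, ha⟩ =>
    hS.stablyFinite_of_isCuFunctional hsimple hlam ha₀ ha
  tfae_finish
end
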